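/- If (Q_1, Q_2) is a 2-colouring of the hypergraph (Q, S), then the sets W(c_1) = {v}, W(c_2) = {u_1}, W(c_3) = {S_1,...,S_n} ∪ Q_1 ∪ Q', W(c_4) = {S_1',...,S_n'} ∪ Q_2, W(c_5) = {w} and W(c_6) = {x} form a C_6-witness structure of the graph G'. -/

import Mathlib

/-- `W` is an `H`-witness structure of `G`: a family of pairwise disjoint nonempty
connected subsets of `V(G)` covering `V(G)` such that distinct `h₁ h₂` are adjacent in `H`
iff there is an edge of `G` between `W h₁` and `W h₂`. -/
def IsWitnessStructure {V U : Type*} (G : SimpleGraph V) (H : SimpleGraph U)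
    (W : U → Set V) : Prop :=
  (∀ h, (W h).Nonempty) ∧
  (∀ h₁ h₂, h₁ ≠ h₂ → Disjoint (W h₁) (W h₂)) ∧
  (⋃ h, W h) = Set.univ ∧
  (∀ h, (G.induce (W h)).Connected) ∧
  (∀ h₁ h₂, h₁ ≠ h₂ → ((∃ a ∈ W h₁, ∃ b ∈ W h₂, G.Adj a b) ↔ H.Adj h₁ h₂))

/-- `G` contains `H` as a contraction. -/
def ContainsAsContraction {V U : Type*} (G : SimpleGraph V) (H : SimpleGraph U) : Prop :=
  ∃ W : U → Set V, IsWitnessStructure G H W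

/-- Raw vertex names for the graph `G'`: `G(Q,S)` with `q*` and `u₂` deleted and a new
vertex `x` added (adjacent to `v` and `w`). -/
inductive HVertex' (m n : ℕ) : Type
  | elt : Fin m → HVertex' m n
  | hyp : Fin n → HVertex' m n
  | copy : Fin n → HVertex' m n
  | sub : Fin m → Fin n → HVertex' m n
  | u1 : HVertex' m n
  | x : HVertex' m n
  | v : HVertex' m n
  | w : HVertex' m n

/-- A raw vertex name is an actual vertex of `G'`: the subdivision vertex `q^i_j`
exists only when `q_i ∈ S_j`. -/
def HVertex'.OK {m n : ℕ} (S : Fin n → Set (Fin m)) : HVertex' m n → Prop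
  | .sub i j => i ∈ S j
  | _ => True

/-- The vertex set of `G'`. -/
def GVertex' {m n : ℕ} (S : Fin n → Set (Fin m)) : Type := {y : HVertex' m n // y.OK S}

/-- The (asymmetrically listed) edges of `G'`:
`q^i_j q_i`, `q^i_j S_j`, `q_i S_j'` (for `q_i ∈ S_j`), `S_j S_k'` (all `j,k`),
`u₁ S_j`, `u₁ v`, `x v`, `x w`, `w S_j'`. -/
def baseAdj' {m n : ℕ} (S : Fin n → Set (Fin m)) : HVertex' m n → HVertex' m n → Prop
  | .sub i _, .elt i' => i = i'
  | .sub _ j, .hyp j' => j = j'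
  | .elt i, .copy j => i ∈ S j
  | .hyp _, .copy _ => True
  | .u1, .hyp _ => True
  | .u1, .v => True
  | .x, .v => True
  | .x, .w => True
  | .w, .copy _ => True
  | _, _ => False

/-- The graph `G'`. -/
def GQS' {m n : ℕ} (S : Fin n → Set (Fin m)) : SimpleGraph (GVertex' S) :=
  SimpleGraph.fromRel (fun a b => baseAdj' S a.1 b.1)

/-- `(Q₁, Q₂)` is a 2-colouring of the hypergraph `(Q, S)`: a partition of `Q` such that
every hyperedge meets both parts. -/
def IsTwoColouring {m n : ℕ} (S : Fin n → Set (Fin m)) (Q₁ Q₂ : Set (Fin m)) : Prop :=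
  Q₁ ∪ Q₂ = Set.univ ∧ Disjoint Q₁ Q₂ ∧ ∀ j, (Q₁ ∩ S j).Nonempty ∧ (Q₂ ∩ S j).Nonempty

/-! Every block is connected because `S_n = Q`: all of `Q₁` hangs off `S_n` through the
subdivision vertices, all of `Q₂` off `S_n'`, and since every hyperedge meets both colour
classes, each `S_j` reaches some `q ∈ Q₁` and each `S_j'` some `q ∈ Q₂`. Every edge of `G'`
joins two blocks that are equal or consecutive on the cycle, and consecutive blocks are
joined by `v u₁`, `u₁ S_n`, `S_n S_n'`, `S_n' w`, `w x`, `x v`. -/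

section WitnessStructure

variable {V U : Type*} {G : SimpleGraph V} {H : SimpleGraph U}

theorem isWitnessStructure_fibres (f : V → U)
    (hconn : ∀ h, (G.induce (f ⁻¹' {h})).Connected)
    (hmap : ∀ a b, G.Adj a b → f a ≠ f b → H.Adj (f a) (f b))
    (hedge : ∀ h₁ h₂, H.Adj h₁ h₂ → ∃ a b, f a = h₁ ∧ f b = h₂ ∧ G.Adj a b) :
    IsWitnessStructure G H (fun h => f ⁻¹' {h}) := by
  refine ⟨fun h => Set.nonempty_coe_sort.mp (hconn h).nonempty,
    fun h₁ h₂ hne => (Set.disjoint_singleton.mpr hne).preimage f,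
    by ext; simp, hconn, fun h₁ h₂ hne => ⟨?_, fun hadj => ?_⟩⟩
  · rintro ⟨a, rfl, b, rfl, hab⟩
    exact hmap a b hab hne
  · obtain ⟨a, b, ha, hb, hab⟩ := hedge h₁ h₂ hadj
    exact ⟨a, ha, b, hb, hab⟩

theorem exists_adj_of_cycleGraph_adj {n : ℕ} (f : V → Fin (n + 2))
    (hstep : ∀ k, ∃ a b, f a = k ∧ f b = k + 1 ∧ G.Adj a b) {h₁ h₂ : Fin (n + 2)}
    (hadj : (SimpleGraph.cycleGraph (n + 2)).Adj h₁ h₂) :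
    ∃ a b, f a = h₁ ∧ f b = h₂ ∧ G.Adj a b := by
  rcases SimpleGraph.cycleGraph_adj.mp hadj with h | h <;> rw [sub_eq_iff_eq_add'] at h <;>
    subst h
  · obtain ⟨a, b, ha, hb, hab⟩ := hstep h₂
    exact ⟨b, a, hb, ha, hab.symm⟩
  · exact hstep h₁

theorem connected_induce_of_forall_eq {s : Set V} {a : V} (ha : a ∈ s) (h : ∀ b ∈ s, b = a) :
    (G.induce s).Connected := by
  rw [Set.eq_singleton_iff_unique_mem.mpr ⟨ha, h⟩, SimpleGraph.induce_singleton_eq_top]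
  exact SimpleGraph.connected_top

end WitnessStructure

namespace HVertex'

variable {m n : ℕ}

open Classical in
/-- `c6Index Q₁ y = k` says that `y` lies in `W(c_{k+1})`. -/
noncomputable def c6Index (Q₁ : Set (Fin m)) : HVertex' m n → Fin 6
  | .v => 0
  | .u1 => 1
  | .hyp _ | .sub _ _ => 2
  | .elt i => if i ∈ Q₁ then 2 else 3
  | .copy _ => 3
  | .w => 4
  | .x => 5

theorem baseAdj'_irrefl (S : Fin n → Set (Fin m)) (y : HVertex' m n) : ¬ baseAdj' S y y := by
  cases y <;> simp [baseAdj']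

theorem c6Index_adj_of_baseAdj' {S : Fin n → Set (Fin m)} (Q₁ : Set (Fin m))
    {y z : HVertex' m n} (h : baseAdj' S y z) (hne : c6Index Q₁ y ≠ c6Index Q₁ z) :
    (SimpleGraph.cycleGraph 6).Adj (c6Index Q₁ y) (c6Index Q₁ z) := by
  cases y <;> cases z <;> simp only [baseAdj'] at h <;> simp only [c6Index] at hne ⊢ <;>
    (try split_ifs at hne ⊢) <;> first | decide | exact absurd rfl hne

end HVertex'

open HVertex'

variable {m n : ℕ} {S : Fin n → Set (Fin m)}

theorem GQS'_adj_iff {a b : GVertex' S} :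
    (GQS' S).Adj a b ↔ baseAdj' S a.1 b.1 ∨ baseAdj' S b.1 a.1 := by
  refine (SimpleGraph.fromRel_adj _ _ _).trans (and_iff_right_of_imp fun h hab => ?_)
  rcases h with h | h <;> exact baseAdj'_irrefl S _ (Subtype.ext_iff.mp hab ▸ h)

variable (S) in
def c6Fibre (Q₁ : Set (Fin m)) (k : Fin 6) : Set (GVertex' S) :=
  (fun z => c6Index Q₁ z.1) ⁻¹' {k}

theorem c6Fibre_eq {Q₁ Q₂ : Set (Fin m)} (hQ₂ : Q₂ = Q₁ᶜ) :
    c6Fibre S Q₁ = ![ {(⟨.v, trivial⟩ : GVertex' S)},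
         {(⟨.u1, trivial⟩ : GVertex' S)},
         {z : GVertex' S | (∃ j, z.1 = .hyp j) ∨ (∃ i ∈ Q₁, z.1 = .elt i) ∨
            (∃ i j, z.1 = .sub i j)},
         {z : GVertex' S | (∃ j, z.1 = .copy j) ∨ (∃ i ∈ Q₂, z.1 = .elt i)},
         {(⟨.w, trivial⟩ : GVertex' S)},
         {(⟨.x, trivial⟩ : GVertex' S)} ] := by
  subst hQ₂
  funext k
  ext ⟨y, hy⟩
  change c6Index Q₁ y = k ↔ _
  -- the anonymous constructors in the statement are typed as subtypes, not as `GVertex' S`,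
  -- so membership lemmas only apply once `GVertex'` is unfolded
  unfold GVertex'
  fin_cases k <;> cases y <;> simp [c6Index, Subtype.ext_iff] <;> split_ifs <;> decide

theorem IsTwoColouring.eq_compl {Q₁ Q₂ : Set (Fin m)} (h : IsTwoColouring S Q₁ Q₂) :
    Q₂ = Q₁ᶜ :=
  (isCompl_iff.mpr ⟨h.2.1, codisjoint_iff.mpr h.1⟩).compl_eq.symm

section Connectivity

variable {Q₁ : Set (Fin m)} {j₀ : Fin n}

theorem reachable_induce_c6Fibre {k : Fin 6} (a b : GVertex' S) (ha : a ∈ c6Fibre S Q₁ k)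
    (hb : b ∈ c6Fibre S Q₁ k) (h : baseAdj' S a.1 b.1 ∨ baseAdj' S b.1 a.1) :
    ((GQS' S).induce (c6Fibre S Q₁ k)).Reachable ⟨a, ha⟩ ⟨b, hb⟩ :=
  (SimpleGraph.induce_adj.mpr (GQS'_adj_iff.mpr h)).reachable

theorem connected_induce_c6Fibre_two (hj₀ : S j₀ = Set.univ)
    (hQ₁ : ∀ j, (Q₁ ∩ S j).Nonempty) : ((GQS' S).induce (c6Fibre S Q₁ 2)).Connected := by
  have hS := Set.eq_univ_iff_forall.mp hj₀
  let hub : c6Fibre S Q₁ 2 := ⟨⟨.hyp j₀, trivial⟩, rfl⟩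
  have reach_elt : ∀ i (hi : i ∈ Q₁),
      ((GQS' S).induce _).Reachable hub ⟨⟨.elt i, trivial⟩, if_pos hi⟩ := fun i hi =>
    (reachable_induce_c6Fibre hub.1 ⟨.sub i j₀, hS i⟩ rfl rfl (.inr rfl)).trans
      (reachable_induce_c6Fibre ⟨.sub i j₀, hS i⟩ ⟨.elt i, trivial⟩ rfl (if_pos hi) (.inl rfl))
  have reach_hyp : ∀ j, ((GQS' S).induce _).Reachable hub ⟨⟨.hyp j, trivial⟩, rfl⟩ := by
    intro j
    obtain ⟨i, hi, hij⟩ := hQ₁ j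
    exact (reach_elt i hi).trans <|
      (reachable_induce_c6Fibre ⟨.elt i, trivial⟩ ⟨.sub i j, hij⟩ (if_pos hi) rfl (.inr rfl)).trans
        (reachable_induce_c6Fibre ⟨.sub i j, hij⟩ ⟨.hyp j, trivial⟩ rfl rfl (.inl rfl))
  refine (SimpleGraph.connected_iff_exists_forall_reachable _).mpr ⟨hub, ?_⟩
  rintro ⟨⟨y, hy⟩, hk⟩
  change c6Index Q₁ y = 2 at hk
  cases y with
  | hyp j => exact reach_hyp j
  | sub i j =>
    exact (reach_hyp j).trans
      (reachable_induce_c6Fibre ⟨.hyp j, trivial⟩ ⟨.sub i j, hy⟩ rfl rfl (.inr rfl))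
  | elt i => exact reach_elt i (by by_contra hi; simp [c6Index, hi] at hk)
  | _ => simp [c6Index] at hk

theorem connected_induce_c6Fibre_three (hj₀ : S j₀ = Set.univ)
    (hQ₂ : ∀ j, (Q₁ᶜ ∩ S j).Nonempty) : ((GQS' S).induce (c6Fibre S Q₁ 3)).Connected := by
  have hS := Set.eq_univ_iff_forall.mp hj₀
  let hub : c6Fibre S Q₁ 3 := ⟨⟨.copy j₀, trivial⟩, rfl⟩
  have reach_elt : ∀ i (hi : i ∉ Q₁),
      ((GQS' S).induce _).Reachable hub ⟨⟨.elt i, trivial⟩, if_neg hi⟩ := fun i hi =>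
    reachable_induce_c6Fibre hub.1 ⟨.elt i, trivial⟩ rfl (if_neg hi) (.inr (hS i))
  refine (SimpleGraph.connected_iff_exists_forall_reachable _).mpr ⟨hub, ?_⟩
  rintro ⟨⟨y, hy⟩, hk⟩
  change c6Index Q₁ y = 3 at hk
  cases y with
  | copy j =>
    obtain ⟨i, hi, hij⟩ := hQ₂ j
    exact (reach_elt i hi).trans
      (reachable_induce_c6Fibre ⟨.elt i, trivial⟩ ⟨.copy j, trivial⟩ (if_neg hi) rfl (.inl hij))
  | elt i => exact reach_elt i (by intro hi; simp [c6Index, hi] at hk)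
  | _ => simp [c6Index] at hk

theorem eq_of_c6Index_eq {k : Fin 6} {y z : HVertex' m n} (hy : c6Index Q₁ y = k)
    (hz : c6Index Q₁ z = k) (h₂ : k ≠ 2) (h₃ : k ≠ 3) : y = z := by
  subst hy
  cases y <;> cases z <;> simp only [c6Index] at hz h₂ h₃ <;> (try split_ifs at hz h₂ h₃) <;>
    first | rfl | exact absurd hz (by decide) | exact absurd rfl h₂ | exact absurd rfl h₃

theorem connected_induce_c6Fibre_of_ne {k : Fin 6} (y₀ : HVertex' m n) (hy₀ : y₀.OK S)
    (hk : c6Index Q₁ y₀ = k) (h₂ : k ≠ 2) (h₃ : k ≠ 3) :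
    ((GQS' S).induce (c6Fibre S Q₁ k)).Connected :=
  connected_induce_of_forall_eq (a := ⟨y₀, hy₀⟩) hk
    fun _ hz => Subtype.ext (eq_of_c6Index_eq hz hk h₂ h₃)

theorem connected_induce_c6Fibre (hj₀ : S j₀ = Set.univ) (hQ₁ : ∀ j, (Q₁ ∩ S j).Nonempty)
    (hQ₂ : ∀ j, (Q₁ᶜ ∩ S j).Nonempty) (k : Fin 6) :
    ((GQS' S).induce (c6Fibre S Q₁ k)).Connected := by
  fin_cases k
  · exact connected_induce_c6Fibre_of_ne .v trivial rfl (by decide) (by decide)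
  · exact connected_induce_c6Fibre_of_ne .u1 trivial rfl (by decide) (by decide)
  · exact connected_induce_c6Fibre_two hj₀ hQ₁
  · exact connected_induce_c6Fibre_three hj₀ hQ₂
  · exact connected_induce_c6Fibre_of_ne .w trivial rfl (by decide) (by decide)
  · exact connected_induce_c6Fibre_of_ne .x trivial rfl (by decide) (by decide)

end Connectivity

theorem c6Index_adj_of_GQS'_adj (Q₁ : Set (Fin m)) {a b : GVertex' S} (h : (GQS' S).Adj a b)
    (hne : c6Index Q₁ a.1 ≠ c6Index Q₁ b.1) :
    (SimpleGraph.cycleGraph 6).Adj (c6Index Q₁ a.1) (c6Index Q₁ b.1) := by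
  rcases GQS'_adj_iff.mp h with h | h
  · exact c6Index_adj_of_baseAdj' Q₁ h hne
  · exact (c6Index_adj_of_baseAdj' Q₁ h hne.symm).symm

theorem exists_GQS'_adj_c6Index_succ (Q₁ : Set (Fin m)) (j₀ : Fin n) (k : Fin 6) :
    ∃ a b : GVertex' S, c6Index Q₁ a.1 = k ∧ c6Index Q₁ b.1 = k + 1 ∧ (GQS' S).Adj a b := by
  fin_cases k
  · exact ⟨⟨.v, trivial⟩, ⟨.u1, trivial⟩, rfl, rfl, GQS'_adj_iff.mpr (.inr trivial)⟩
  · exact ⟨⟨.u1, trivial⟩, ⟨.hyp j₀, trivial⟩, rfl, rfl, GQS'_adj_iff.mpr (.inl trivial)⟩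
  · exact ⟨⟨.hyp j₀, trivial⟩, ⟨.copy j₀, trivial⟩, rfl, rfl, GQS'_adj_iff.mpr (.inl trivial)⟩
  · exact ⟨⟨.copy j₀, trivial⟩, ⟨.w, trivial⟩, rfl, rfl, GQS'_adj_iff.mpr (.inr trivial)⟩
  · exact ⟨⟨.w, trivial⟩, ⟨.x, trivial⟩, rfl, rfl, GQS'_adj_iff.mpr (.inr trivial)⟩
  · exact ⟨⟨.x, trivial⟩, ⟨.v, trivial⟩, rfl, rfl, GQS'_adj_iff.mpr (.inl trivial)⟩

theorem stmt_16 {m n : ℕ} (S : Fin n → Set (Fin m)) (hn : 2 ≤ n)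
    (hSlast : S ⟨n - 1, by omega⟩ = Set.univ) (Q₁ Q₂ : Set (Fin m)) (hcol : IsTwoColouring S Q₁ Q₂) :
    IsWitnessStructure (GQS' S) (SimpleGraph.cycleGraph 6)
      ![ {(⟨.v, trivial⟩ : GVertex' S)},
         {(⟨.u1, trivial⟩ : GVertex' S)},
         {z : GVertex' S | (∃ j, z.1 = .hyp j) ∨ (∃ i ∈ Q₁, z.1 = .elt i) ∨
            (∃ i j, z.1 = .sub i j)},
         {z : GVertex' S | (∃ j, z.1 = .copy j) ∨ (∃ i ∈ Q₂, z.1 = .elt i)},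
         {(⟨.w, trivial⟩ : GVertex' S)},
         {(⟨.x, trivial⟩ : GVertex' S)} ] := by
  obtain ⟨hQ₁, hQ₂⟩ : (∀ j, (Q₁ ∩ S j).Nonempty) ∧ ∀ j, (Q₁ᶜ ∩ S j).Nonempty :=
    ⟨fun j => (hcol.2.2 j).1, hcol.eq_compl ▸ fun j => (hcol.2.2 j).2⟩
  rw [← c6Fibre_eq hcol.eq_compl]
  exact isWitnessStructure_fibres _ (connected_induce_c6Fibre hSlast hQ₁ hQ₂)
    (fun _ _ => c6Index_adj_of_GQS'_adj Q₁)
    (fun _ _ => exists_adj_of_cycleGraph_adj _ (exists_GQS'_adj_c6Index_succ Q₁ ⟨n - 1, by omega⟩))
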